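/- With $\Upsilon_k$ independent exponentials of rate $k(k+1)/2$, there exists $C<\infty$ such that for all sufficiently large $n$, $\mathbf{P}\{\sum_{k\geq n}\Upsilon_k>\delta\}\leq C\,e^{-\delta n(\log n)^2/2}$. In particular the tail of the block-counting variable of Kingman's coalescent at time $\delta$ decays faster than any Poisson tail. -/

import Mathlib

/-!
Chernoff's bound at `θ = n log² n`. An exponential variable of rate `r > θ` has exponential
moment `r / (r - θ) ≤ exp (2θ / r)` as soon as `2θ ≤ r`, and for the rates `r_k = k(k+1)/2` the
exponents `2θ / r_k = 4θ (1/k - 1/(k+1))` telescope. Hence every partial sum of `∑_{k ≥ n} Υ_k`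
exceeds `δ` with probability at most `exp (-θδ + 4θ/n) = exp (-δ n log² n + 4 log² n)`, which is
at most `exp (-δ n log² n / 2)` once `δ n ≥ 8`; the admissibility `2θ ≤ r_n` holds since
`4 log² n ≤ n` for large `n`.
-/

open MeasureTheory ProbabilityTheory

open Real Set Filter
open scoped ENNReal

namespace ProbabilityTheory

lemma expMeasure_eq_withDensity_toNNReal (r : ℝ) :
    expMeasure r = volume.withDensity fun x => ((exponentialPDFReal r x).toNNReal : ℝ≥0∞) :=
  rfl

lemma toNNReal_exponentialPDFReal_smul_exp_mul {r : ℝ} (hr : 0 < r) (t : ℝ) :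
    (fun x => (exponentialPDFReal r x).toNNReal • exp (t * x)) =
      (Ici 0).indicator fun x => r * exp ((t - r) * x) := by
  funext x
  rw [NNReal.smul_def, smul_eq_mul, Real.coe_toNNReal _ (exponentialPDFReal_nonneg hr x)]
  by_cases hx : 0 ≤ x
  · simp only [exponentialPDFReal, gammaPDFReal, if_pos hx, indicator_of_mem (mem_Ici.2 hx),
      rpow_one, Gamma_one, div_one, sub_self, rpow_zero, mul_one, mul_assoc, ← exp_add]
    ring_nf
  · simp [exponentialPDFReal, gammaPDFReal, hx]

lemma integrable_exp_mul_expMeasure {r t : ℝ} (hr : 0 < r) (ht : t < r) :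
    Integrable (fun x => exp (t * x)) (expMeasure r) := by
  rw [expMeasure_eq_withDensity_toNNReal, integrable_withDensity_iff_integrable_smul
    (measurable_exponentialPDFReal r).real_toNNReal, toNNReal_exponentialPDFReal_smul_exp_mul hr,
    integrable_indicator_iff measurableSet_Ici, integrableOn_Ici_iff_integrableOn_Ioi]
  exact (integrableOn_exp_mul_Ioi (by linarith) 0).const_mul r

lemma mgf_id_expMeasure {r t : ℝ} (hr : 0 < r) (ht : t < r) :
    mgf id (expMeasure r) t = r / (r - t) := by
  rw [mgf, expMeasure_eq_withDensity_toNNReal, integral_withDensity_eq_integral_smul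
    (measurable_exponentialPDFReal r).real_toNNReal]
  simp only [id_eq]
  rw [toNNReal_exponentialPDFReal_smul_exp_mul hr, integral_indicator measurableSet_Ici,
    integral_Ici_eq_integral_Ioi, integral_const_mul, integral_exp_mul_Ioi (by linarith),
    mul_zero, exp_zero, neg_div, ← div_neg, neg_sub, mul_one_div]

section RandomVariables

variable {Ω : Type*} [MeasurableSpace Ω] {μ : Measure Ω}

lemma integrable_exp_mul_of_map_eq_expMeasure {X : Ω → ℝ} {r t : ℝ} (hX : Measurable X)
    (hlaw : μ.map X = expMeasure r) (hr : 0 < r) (ht : t < r) :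
    Integrable (fun ω => exp (t * X ω)) μ := by
  have h := integrable_exp_mul_expMeasure hr ht
  rwa [← hlaw, integrable_map_measure (by fun_prop) hX.aemeasurable] at h

lemma mgf_of_map_eq_expMeasure {X : Ω → ℝ} {r t : ℝ} (hX : AEMeasurable X μ)
    (hlaw : μ.map X = expMeasure r) (hr : 0 < r) (ht : t < r) :
    mgf X μ t = r / (r - t) := by
  rw [← mgf_id_map hX, hlaw, mgf_id_expMeasure hr ht]

lemma measure_tsum_gt_le_of_forall_measure_sum_range_ge_le {f : ℕ → Ω → ℝ} {δ : ℝ}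
    {c : ℝ≥0∞} (hδ : 0 ≤ δ) (h : ∀ m, μ {ω | δ ≤ ∑ i ∈ Finset.range m, f i ω} ≤ c) :
    μ {ω | δ < ∑' i, f i ω} ≤ c := by
  set A : ℕ → Set Ω := fun m => ⋂ j ≥ m, {ω | δ ≤ ∑ i ∈ Finset.range j, f i ω}
  have hA : Monotone A := fun a b hab => biInter_subset_biInter_left fun j hj => hab.trans hj
  have hsub : {ω | δ < ∑' i, f i ω} ⊆ ⋃ m, A m := by
    intro ω hω
    -- a non-summable series has `tsum = 0 ≤ δ`
    have hs : Summable fun i => f i ω := by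
      by_contra hs
      exact (tsum_eq_zero_of_not_summable hs ▸ hω : δ < 0).not_ge hδ
    obtain ⟨m, hm⟩ :=
      eventually_atTop.1 (hs.hasSum.tendsto_sum_nat.eventually (eventually_gt_nhds hω))
    exact mem_iUnion.2 ⟨m, mem_iInter₂.2 fun j hj => (hm j hj).le⟩
  calc μ {ω | δ < ∑' i, f i ω} ≤ μ (⋃ m, A m) := measure_mono hsub
    _ = ⨆ m, μ (A m) := hA.measure_iUnion
    _ ≤ c := iSup_le fun m => (measure_mono (biInter_subset_of_mem le_rfl)).trans (h m)

lemma iIndepFun.measure_sum_ge_le_exp_mul_prod_mgf {ι : Type*} {X : ι → Ω → ℝ}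
    (hindep : iIndepFun X μ) (hmeas : ∀ i, Measurable (X i)) (s : Finset ι) (δ : ℝ) {θ : ℝ}
    (hθ : 0 ≤ θ) (hint : ∀ i ∈ s, Integrable (fun ω => exp (θ * X i ω)) μ) :
    μ {ω | δ ≤ ∑ i ∈ s, X i ω} ≤ ENNReal.ofReal (exp (-θ * δ) * ∏ i ∈ s, mgf (X i) μ θ) := by
  have := hindep.isProbabilityMeasure
  have h := measure_ge_le_exp_mul_mgf δ hθ (hindep.integrable_exp_mul_sum hmeas hint)
  rw [hindep.mgf_sum hmeas, measureReal_def] at h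
  simpa only [Finset.sum_apply] using (ENNReal.le_ofReal_iff_toReal_le (measure_ne_top _ _)
    (mul_nonneg (exp_nonneg _) (Finset.prod_nonneg fun _ _ => mgf_nonneg))).2 h

theorem iIndepFun.measure_tsum_gt_le_exp_mul {X : ℕ → Ω → ℝ} (hindep : iIndepFun X μ)
    (hmeas : ∀ i, Measurable (X i)) {δ θ B : ℝ} (hδ : 0 ≤ δ) (hθ : 0 ≤ θ)
    (hint : ∀ i, Integrable (fun ω => exp (θ * X i ω)) μ)
    (hB : ∀ m, ∏ i ∈ Finset.range m, mgf (X i) μ θ ≤ B) :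
    μ {ω | δ < ∑' i, X i ω} ≤ ENNReal.ofReal (exp (-θ * δ) * B) :=
  measure_tsum_gt_le_of_forall_measure_sum_range_ge_le hδ fun m =>
    (hindep.measure_sum_ge_le_exp_mul_prod_mgf hmeas _ δ hθ fun i _ => hint i).trans
      (ENNReal.ofReal_le_ofReal (mul_le_mul_of_nonneg_left (hB m) (exp_nonneg _)))

end RandomVariables

end ProbabilityTheory

lemma div_sub_le_exp_two_mul_div {r θ : ℝ} (hθ : 0 ≤ θ) (h : 2 * θ ≤ r) :
    r / (r - θ) ≤ exp (2 * θ / r) := by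
  rcases (show 0 ≤ r by linarith).eq_or_lt with rfl | hr
  · simp
  have hrθ : 0 < r - θ := by linarith
  calc r / (r - θ) = 1 + θ / (r - θ) := by field_simp; ring
    _ ≤ 1 + 2 * θ / r := by
      gcongr 1 + ?_
      rw [div_le_div_iff₀ hrθ hr]
      nlinarith
    _ ≤ exp (2 * θ / r) := by linarith [add_one_le_exp (2 * θ / r)]

noncomputable def kingmanRate (k : ℕ) : ℝ := k * (k + 1) / 2

lemma kingmanRate_pos {k : ℕ} (hk : k ≠ 0) : 0 < kingmanRate k := by
  unfold kingmanRate
  have : (0 : ℝ) < k := by exact_mod_cast Nat.pos_of_ne_zero hk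
  positivity

lemma kingmanRate_mono : Monotone kingmanRate := fun a b hab => by
  unfold kingmanRate
  gcongr

lemma two_mul_le_kingmanRate_add {n : ℕ} {θ : ℝ} (hθn : 4 * θ ≤ n * (n + 1)) (i : ℕ) :
    2 * θ ≤ kingmanRate (n + i) :=
  (show 2 * θ ≤ kingmanRate n by unfold kingmanRate; linarith).trans
    (kingmanRate_mono (Nat.le_add_right n i))

lemma two_mul_div_kingmanRate (θ : ℝ) {k : ℕ} (hk : k ≠ 0) :
    2 * θ / kingmanRate k = 4 * θ * ((k : ℝ)⁻¹ - ((k + 1 : ℕ) : ℝ)⁻¹) := by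
  unfold kingmanRate
  have : (k : ℝ) ≠ 0 := by exact_mod_cast hk
  push_cast
  field_simp
  ring

lemma sum_two_mul_div_kingmanRate_add {n : ℕ} (hn : n ≠ 0) (θ : ℝ) (m : ℕ) :
    ∑ i ∈ Finset.range m, 2 * θ / kingmanRate (n + i) =
      4 * θ * ((n : ℝ)⁻¹ - ((n + m : ℕ) : ℝ)⁻¹) := by
  have h := Finset.sum_range_sub' (fun i => ((n + i : ℕ) : ℝ)⁻¹) m
  rw [add_zero] at h
  rw [← h, Finset.mul_sum]
  refine Finset.sum_congr rfl fun i _ => ?_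
  rw [two_mul_div_kingmanRate θ (by omega), add_assoc]

lemma prod_kingmanRate_div_sub_le {n : ℕ} (hn : n ≠ 0) {θ : ℝ} (hθ : 0 ≤ θ)
    (hθn : 4 * θ ≤ n * (n + 1)) (m : ℕ) :
    ∏ i ∈ Finset.range m, kingmanRate (n + i) / (kingmanRate (n + i) - θ) ≤
      exp (4 * θ / n) := by
  have hrate := two_mul_le_kingmanRate_add hθn
  calc ∏ i ∈ Finset.range m, kingmanRate (n + i) / (kingmanRate (n + i) - θ)
      ≤ ∏ i ∈ Finset.range m, exp (2 * θ / kingmanRate (n + i)) := by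
        refine Finset.prod_le_prod (fun i _ => div_nonneg ?_ ?_) fun i _ =>
          div_sub_le_exp_two_mul_div hθ (hrate i) <;> linarith [hrate i]
    _ = exp (4 * θ * ((n : ℝ)⁻¹ - ((n + m : ℕ) : ℝ)⁻¹)) := by
      rw [← exp_sum, sum_two_mul_div_kingmanRate_add hn]
    _ ≤ exp (4 * θ / n) := by
      rw [exp_le_exp, div_eq_mul_inv]
      exact mul_le_mul_of_nonneg_left (sub_le_self _ (by positivity)) (by positivity)

theorem measure_kingman_tail_gt_le {Ω : Type*} [MeasurableSpace Ω] {μ : Measure Ω}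
    {Υ : ℕ → Ω → ℝ} (hmeas : ∀ k, Measurable (Υ k)) (hindep : iIndepFun Υ μ) {n : ℕ}
    (hn : n ≠ 0) (hlaw : ∀ k, n ≤ k → μ.map (Υ k) = expMeasure (kingmanRate k))
    {δ θ : ℝ} (hδ : 0 ≤ δ) (hθ : 0 ≤ θ) (hθn : 4 * θ ≤ n * (n + 1)) :
    μ {ω | δ < ∑' k, Υ (n + k) ω} ≤ ENNReal.ofReal (exp (-θ * δ) * exp (4 * θ / n)) := by
  have hlaw' (i : ℕ) : μ.map (Υ (n + i)) = expMeasure (kingmanRate (n + i)) :=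
    hlaw _ (Nat.le_add_right n i)
  have hpos (i : ℕ) : 0 < kingmanRate (n + i) := kingmanRate_pos (by omega)
  have hrate (i : ℕ) : θ < kingmanRate (n + i) := by
    linarith [two_mul_le_kingmanRate_add hθn i, hpos i]
  refine (hindep.precomp (add_right_injective n)).measure_tsum_gt_le_exp_mul
    (fun i => hmeas (n + i)) hδ hθ
    (fun i => integrable_exp_mul_of_map_eq_expMeasure (hmeas _) (hlaw' i) (hpos i) (hrate i))
    fun m => ?_
  rw [Finset.prod_congr rfl fun i _ =>
    mgf_of_map_eq_expMeasure (hmeas _).aemeasurable (hlaw' i) (hpos i) (hrate i)]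
  exact prod_kingmanRate_div_sub_le hn hθ hθn m

lemma eventually_four_mul_log_sq_le : ∀ᶠ x : ℝ in atTop, 4 * log x ^ 2 ≤ x := by
  filter_upwards [isLittleO_pow_log_id_atTop.bound (show (0 : ℝ) < 1 / 4 by norm_num),
    eventually_ge_atTop 0] with x hx hx0
  rw [norm_of_nonneg (sq_nonneg _), id, norm_of_nonneg hx0] at hx
  linarith

theorem kingman_tail_superexponential_general
    {Ω : Type*} [MeasurableSpace Ω] (μ : Measure Ω)
    (Υ : ℕ → Ω → ℝ)
    (hmeas : ∀ n, Measurable (Υ n))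
    (hindep : iIndepFun Υ μ)
    (hlaw : ∀ n : ℕ, 1 ≤ n →
      Measure.map (Υ n) μ = expMeasure ((n : ℝ) * (n + 1) / 2))
    (δ : ℝ) (hδ : 0 < δ) :
    ∃ C : ℝ, ∃ N : ℕ, ∀ n : ℕ, N ≤ n →
      μ {ω | δ < ∑' k : ℕ, Υ (n + k) ω} ≤
        ENNReal.ofReal (C * Real.exp (-δ * n * (Real.log n) ^ 2 / 2)) := by
  obtain ⟨N, hN⟩ := eventually_atTop.1 <| (eventually_ge_atTop 1).and <|
    ((tendsto_natCast_atTop_atTop.const_mul_atTop hδ).eventually_ge_atTop 8).and <|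
    tendsto_natCast_atTop_atTop.eventually eventually_four_mul_log_sq_le
  refine ⟨1, N, fun n hn => ?_⟩
  obtain ⟨hn1, hδn, hlog⟩ := hN n hn
  have hn0 : (0 : ℝ) < n := by exact_mod_cast hn1
  set L := log n ^ 2
  calc μ {ω | δ < ∑' k, Υ (n + k) ω}
      ≤ ENNReal.ofReal (exp (-(n * L) * δ) * exp (4 * (n * L) / n)) :=
        measure_kingman_tail_gt_le hmeas hindep (by omega)
          (fun k hk => hlaw k (hn1.trans hk)) hδ.le (by positivity) (by nlinarith)
    _ ≤ ENNReal.ofReal (1 * exp (-δ * n * L / 2)) := by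
      refine ENNReal.ofReal_le_ofReal ?_
      rw [← exp_add, one_mul, exp_le_exp, mul_left_comm, mul_div_cancel_left₀ _ hn0.ne']
      nlinarith [mul_nonneg (sq_nonneg (log n)) (sub_nonneg.2 hδn)]

/-- Superexponential tail bound: with `Υ_k` independent exponentials of rate `k(k+1)/2`,
there is a constant `C < ∞` such that for all sufficiently large `n`,
`P{∑_{k ≥ n} Υ_k > δ} ≤ C e^{-δ n (log n)² / 2}`. -/
theorem kingman_tail_superexponential
    {Ω : Type*} [MeasurableSpace Ω] (μ : Measure Ω) [IsProbabilityMeasure μ]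
    (Υ : ℕ → Ω → ℝ)
    (hmeas : ∀ n, Measurable (Υ n))
    (hindep : iIndepFun Υ μ)
    (hlaw : ∀ n : ℕ, 1 ≤ n →
      Measure.map (Υ n) μ = expMeasure ((n : ℝ) * (n + 1) / 2))
    (δ : ℝ) (hδ : 0 < δ) :
    ∃ C : ℝ, ∃ N : ℕ, ∀ n : ℕ, N ≤ n →
      μ {ω | δ < ∑' k : ℕ, Υ (n + k) ω} ≤
        ENNReal.ofReal (C * Real.exp (-δ * n * (Real.log n) ^ 2 / 2)) :=
  kingman_tail_superexponential_general μ Υ hmeas hindep hlaw δ hδ
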